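/- The symmetric decreasing rearrangement preserves the modulus of continuity: if f : ℝ → [0,∞) is continuous with compact support and |f(x) − f(y)| ≤ ω(|x−y|) for a modulus of continuity ω, then the symmetric decreasing rearrangement f* satisfies |f*(x) − f*(y)| ≤ ω(|x−y|) for all x, y. -/

import Mathlib

open MeasureTheory

noncomputable def sdr (f : ℝ → ℝ) (x : ℝ) : ℝ :=
  ∫ t in Set.Ioi (0:ℝ),
    if 2 * |x| < (volume {y : ℝ | t < f y}).toReal then (1:ℝ) else 0

/-!
Write `g t = |{f > t}|`, so that `f*(x)` is the measure of `{t > 0 | 2|x| < g t}`. For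
`0 ≤ p < q`, the heights `t > 0` with `2p < g t ≤ 2q` account for `f*(p) - f*(q)`. If two such
heights satisfied `t₂ > t₁ + ω(q - p)`, the modulus of continuity would put the
`(q - p)`-neighbourhood of `{f > t₂}` inside `{f > t₁}`; in dimension one this neighbourhood
gains at least `2(q - p)` in measure, forcing `g t₁ ≥ g t₂ + 2(q - p) > 2q`. So these heights
form a set of diameter at most `ω(q - p)`.
-/

open Set Metric Bornology

theorem Real.volume_add_le_volume_thickening {s : Set ℝ} (hs : IsBounded s) (hne : s.Nonempty)
    {δ : ℝ} (hδ : 0 < δ) : volume s + ENNReal.ofReal (2 * δ) ≤ volume (thickening δ s) := by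
  set a := sInf s
  set b := sSup s
  have hsab : s ⊆ Icc a b := hs.subset_Icc_sInf_sSup
  have hleft : Ioo (a - δ) a ⊆ thickening δ s := by
    intro z hz
    obtain ⟨u, hu, hua⟩ := exists_lt_of_csInf_lt hne (show a < z + δ by linarith [hz.1])
    refine mem_thickening_iff.2 ⟨u, hu, ?_⟩
    rw [Real.dist_eq, abs_lt]
    constructor <;> linarith [(hsab hu).1, hz.2]
  have hright : Ioo b (b + δ) ⊆ thickening δ s := by
    intro z hz
    obtain ⟨u, hu, hub⟩ := exists_lt_of_lt_csSup hne (show z - δ < b by linarith [hz.2])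
    refine mem_thickening_iff.2 ⟨u, hu, ?_⟩
    rw [Real.dist_eq, abs_lt]
    constructor <;> linarith [(hsab hu).2, hz.1]
  have hdisj_right : Disjoint s (Ioo b (b + δ)) :=
    disjoint_left.2 fun z hz hz' => (hsab hz).2.not_gt hz'.1
  have hdisj_left : Disjoint (s ∪ Ioo b (b + δ)) (Ioo (a - δ) a) := by
    refine disjoint_union_left.2 ⟨disjoint_left.2 fun z hz hz' => (hsab hz).1.not_gt hz'.2,
      disjoint_left.2 fun z hz hz' => ?_⟩
    obtain ⟨u, hu⟩ := hne
    linarith [hz.1, hz'.2, (hsab hu).1, (hsab hu).2]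
  calc volume s + ENNReal.ofReal (2 * δ)
      = volume s + volume (Ioo b (b + δ)) + volume (Ioo (a - δ) a) := by
        rw [Real.volume_Ioo, Real.volume_Ioo, add_sub_cancel_left, sub_sub_cancel, two_mul,
          ENNReal.ofReal_add hδ.le hδ.le, add_assoc]
    _ = volume (s ∪ Ioo b (b + δ) ∪ Ioo (a - δ) a) := by
        rw [measure_union hdisj_left measurableSet_Ioo,
          measure_union hdisj_right measurableSet_Ioo]
    _ ≤ volume (thickening δ s) :=
        measure_mono (union_subset (union_subset (self_subset_thickening hδ s) hright) hleft)

noncomputable def distributionFunction (f : ℝ → ℝ) (t : ℝ) : ℝ :=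
  volume.real {y | t < f y}

section

variable {f ω : ℝ → ℝ}

theorem measurable_distributionFunction (f : ℝ → ℝ) : Measurable (distributionFunction f) :=
  ENNReal.measurable_toReal.comp <| Antitone.measurable fun _ _ hst =>
    measure_mono fun _ hy => hst.trans_lt hy

theorem exists_lt_of_distributionFunction_pos {t : ℝ} (ht : 0 < distributionFunction f t) :
    ∃ y, t < f y := by
  by_contra! h
  have hempty : {y | t < f y} = ∅ := eq_empty_of_forall_notMem fun y hy => (h y).not_gt hy
  simp [distributionFunction, hempty] at ht

theorem HasCompactSupport.isBounded_setOf_lt (hfs : HasCompactSupport f) {t : ℝ} (ht : 0 ≤ t) :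
    IsBounded {y | t < f y} :=
  hfs.isBounded.subset fun _ hy => subset_tsupport f (ht.trans_lt hy).ne'

theorem thickening_setOf_lt_subset (hω : Monotone ω) (hmod : ∀ x y, |f x - f y| ≤ ω |x - y|)
    {t₁ t₂ δ : ℝ} (h : t₁ + ω δ ≤ t₂) : thickening δ {y | t₂ < f y} ⊆ {y | t₁ < f y} := by
  intro z hz
  obtain ⟨u, hu, hzu⟩ := mem_thickening_iff.1 hz
  have hdist : |u - z| ≤ δ := by rw [abs_sub_comm]; exact hzu.le
  have hfu : f u - f z ≤ ω δ := (le_abs_self _).trans ((hmod u z).trans (hω hdist))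
  change t₂ < f u at hu
  change t₁ < f z
  linarith

theorem distributionFunction_add_two_mul_le (hfs : HasCompactSupport f) (hω : Monotone ω)
    (hmod : ∀ x y, |f x - f y| ≤ ω |x - y|) {t₁ t₂ δ : ℝ} (ht₁ : 0 ≤ t₁) (hδ : 0 < δ)
    (h : t₁ + ω δ ≤ t₂) (hpos : 0 < distributionFunction f t₂) :
    distributionFunction f t₂ + 2 * δ ≤ distributionFunction f t₁ := by
  have hsub := thickening_setOf_lt_subset hω hmod h
  have hbdd₁ := hfs.isBounded_setOf_lt ht₁
  have hbdd₂ : IsBounded {y | t₂ < f y} :=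
    hbdd₁.subset ((self_subset_thickening hδ _).trans hsub)
  obtain ⟨y, hy⟩ := exists_lt_of_distributionFunction_pos hpos
  have hvol := (Real.volume_add_le_volume_thickening hbdd₂ ⟨y, hy⟩ hδ).trans (measure_mono hsub)
  have := ENNReal.toReal_mono hbdd₁.measure_lt_top.ne hvol
  rwa [ENNReal.toReal_add hbdd₂.measure_lt_top.ne ENNReal.ofReal_ne_top,
    ENNReal.toReal_ofReal (by positivity)] at this

noncomputable def sdrProfile (f : ℝ → ℝ) (r : ℝ) : ℝ :=
  volume.real ({t | 2 * r < distributionFunction f t} ∩ Ioi 0)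

theorem sdr_eq_sdrProfile (f : ℝ → ℝ) (x : ℝ) : sdr f x = sdrProfile f |x| := by
  have hm : MeasurableSet {t | 2 * |x| < distributionFunction f t} :=
    measurableSet_lt measurable_const (measurable_distributionFunction f)
  rw [sdrProfile, ← measureReal_restrict_apply hm, ← integral_indicator_one hm]
  rfl

theorem abs_sdrProfile_sub_le (hfc : Continuous f) (hfs : HasCompactSupport f)
    (hω0 : ∀ t, 0 ≤ ω t) (hω : Monotone ω) (hmod : ∀ x y, |f x - f y| ≤ ω |x - y|)
    {p q : ℝ} (hp : 0 ≤ p) (hpq : p ≤ q) :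
    |sdrProfile f p - sdrProfile f q| ≤ ω (q - p) := by
  set A := fun r => {t | 2 * r < distributionFunction f t} ∩ Ioi 0
  obtain ⟨M, hM⟩ := hfc.bddAbove_range_of_hasCompactSupport hfs
  have hA_fin : volume (A p) ≠ ⊤ := by
    refine ((measure_mono (t := Ioo 0 M) ?_).trans_lt measure_Ioo_lt_top).ne
    rintro t ⟨ht : 2 * p < _, ht0⟩
    obtain ⟨y, hy⟩ := exists_lt_of_distributionFunction_pos (show 0 < distributionFunction f t by
      linarith)
    exact ⟨ht0, hy.trans_le (hM ⟨y, rfl⟩)⟩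
  have hAqp : A q ⊆ A p := by
    rintro t ⟨ht : 2 * q < _, ht0⟩
    exact ⟨show 2 * p < _ by linarith, ht0⟩
  have hAq_meas : MeasurableSet (A q) :=
    (measurableSet_lt measurable_const (measurable_distributionFunction f)).inter measurableSet_Ioi
  have hgap : ∀ t₁ ∈ A p \ A q, ∀ t₂ ∈ A p \ A q, t₂ - t₁ ≤ ω (q - p) := by
    rintro t₁ ⟨⟨hp₁ : 2 * p < _, ht₁ : 0 < t₁⟩, hq₁⟩ t₂ ⟨⟨hp₂ : 2 * p < _, -⟩, -⟩
    have hq₁ : distributionFunction f t₁ ≤ 2 * q := by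
      by_contra! h
      exact hq₁ ⟨h, ht₁⟩
    by_contra! h
    have := distributionFunction_add_two_mul_le hfs hω hmod ht₁.le
      (show 0 < q - p by linarith) (show t₁ + ω (q - p) ≤ t₂ by linarith) (by linarith)
    linarith
  have hdiam : volume (A p \ A q) ≤ ENNReal.ofReal (ω (q - p)) := by
    refine (Real.volume_le_diam _).trans (ediam_le fun t₁ h₁ t₂ h₂ => ?_)
    rw [edist_le_ofReal (hω0 _), Real.dist_eq, abs_sub_le_iff]
    exact ⟨hgap t₂ h₂ t₁ h₁, hgap t₁ h₁ t₂ h₂⟩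
  rw [sdrProfile, sdrProfile, ← measureReal_sdiff hAqp hAq_meas hA_fin,
    abs_of_nonneg measureReal_nonneg]
  exact ENNReal.toReal_le_of_le_ofReal (hω0 _) hdiam

end

theorem sdr_preserves_modulus_of_continuity_general (f : ℝ → ℝ)
    (hfc : Continuous f) (hfs : HasCompactSupport f)
    (ω : ℝ → ℝ) (hω0 : ∀ t, 0 ≤ ω t) (hωmono : Monotone ω)
    (hmod : ∀ x y, |f x - f y| ≤ ω |x - y|) :
    ∀ x y, |sdr f x - sdr f y| ≤ ω |x - y| := by
  intro x y
  wlog h : |x| ≤ |y| generalizing x y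
  · rw [abs_sub_comm, abs_sub_comm x]
    exact this y x (le_of_not_ge h)
  rw [sdr_eq_sdrProfile, sdr_eq_sdrProfile]
  refine (abs_sdrProfile_sub_le hfc hfs hω0 hωmono hmod (abs_nonneg x) h).trans
    (hωmono ?_)
  rw [abs_sub_comm]
  exact (le_abs_self _).trans (abs_abs_sub_abs_le_abs_sub y x)

theorem sdr_preserves_modulus_of_continuity (f : ℝ → ℝ)
    (hfc : Continuous f) (hfs : HasCompactSupport f) (hf0 : ∀ x, 0 ≤ f x)
    (ω : ℝ → ℝ) (hω0 : ∀ t, 0 ≤ ω t) (hωmono : Monotone ω)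
    (hωlim : Filter.Tendsto ω (nhdsWithin 0 (Set.Ioi 0)) (nhds 0))
    (hmod : ∀ x y, |f x - f y| ≤ ω |x - y|) :
    ∀ x y, |sdr f x - sdr f y| ≤ ω |x - y| :=
  sdr_preserves_modulus_of_continuity_general f hfc hfs ω hω0 hωmono hmod
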